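/- Let G = (V,E) be a graph on n vertices with Z edges, q ≤ n, α > 0, and p a positive even integer. Define W ∈ ℝ^{(C(n,2)+1)×n} with, for each edge e = {i,j}, row e having 2α at columns i and j and b_e = -α; all rows for non-edges are zero with b_e = 0; the last row is β·1 with b_{last} = -(n-q)β. If D ⊆ V is a vertex cover of size q and z ∈ {0,1}^n is the indicator of V∖D, then ‖W z + b‖_p^p = Z·α^p. -/
import Mathlib


/-- The output `W z + b` of the vertex-cover reduction network: rows indexed by
unordered vertex pairs (edge rows have `2α` at the endpoints and constant `-α`,
non-edge rows are zero) plus one extra row `β ∑ᵢ zᵢ - (n-q) β`. -/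
def vertexCoverOut (n : ℕ) (G : SimpleGraph (Fin n)) [DecidableRel G.Adj]
    (α β : ℝ) (q : ℕ) (z : Fin n → ℝ) :
    ({e : Fin n × Fin n // e.1 < e.2} ⊕ Unit) → ℝ :=
  Sum.elim
    (fun e => if G.Adj e.val.1 e.val.2
      then 2 * α * (z e.val.1 + z e.val.2) - α else 0)
    (fun _ => β * (∑ i, z i) - ((n - q : ℕ) : ℝ) * β)

theorem stmt_14 (n q : ℕ) (hq : q ≤ n) (G : SimpleGraph (Fin n)) [DecidableRel G.Adj]
    (p : ℕ) (hp : Even p) (hp0 : 0 < p) (α β : ℝ) (hα : 0 < α) (Z : ℕ)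
    (hZ : Z = (Finset.univ.filter
      (fun e : {e : Fin n × Fin n // e.1 < e.2} => G.Adj e.val.1 e.val.2)).card)
    (D : Finset (Fin n)) (hcover : ∀ i j, G.Adj i j → i ∈ D ∨ j ∈ D)
    (hcard : D.card = q) :
    let z : Fin n → ℝ := fun i => if i ∈ D then 0 else 1
    (∑ r, |vertexCoverOut n G α β q z r| ^ p) = (Z : ℝ) * α ^ p := by
  intro z
  rw [Fintype.sum_sum_type]
  have hsum : (∑ i, z i) = ((n - q : ℕ) : ℝ) := by
    have : (∑ i, z i) = ((Finset.univ.filter (fun i : Fin n => i ∉ D)).card : ℝ) := by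
      simp [z, Finset.sum_ite, Finset.filter_not]
    rw [this]
    congr 1
    rw [Finset.filter_not, Finset.card_sdiff_of_subset (by simp)]
    simp [hcard]
  have hunit : ∑ r : Unit, |vertexCoverOut n G α β q z (Sum.inr r)| ^ p = 0 := by
    simp [vertexCoverOut, hsum, mul_comm, hp0.ne']
  rw [hunit, add_zero]
  have hedge : ∀ e : {e : Fin n × Fin n // e.1 < e.2},
      |vertexCoverOut n G α β q z (Sum.inl e)| ^ p
        = if G.Adj e.val.1 e.val.2 then α ^ p else 0 := by
    intro e
    simp only [vertexCoverOut, Sum.elim_inl]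
    by_cases h : G.Adj e.val.1 e.val.2
    · simp only [h, if_true]
      rcases hcover _ _ h with hi | hj
      · have : z e.val.1 = 0 := by simp [z, hi]
        rw [this]
        rcases (show z e.val.2 = 0 ∨ z e.val.2 = 1 by by_cases h2 : e.val.2 ∈ D <;> simp [z, h2]) with h2 | h2 <;>
          rw [h2] <;> rw [hp.pow_abs] <;> ring_nf <;> rw [hp.neg_pow] <;> ring
      · have : z e.val.2 = 0 := by simp [z, hj]
        rw [this]
        rcases (show z e.val.1 = 0 ∨ z e.val.1 = 1 by by_cases h2 : e.val.1 ∈ D <;> simp [z, h2]) with h2 | h2 <;>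
          rw [h2] <;> rw [hp.pow_abs] <;> ring_nf <;> rw [hp.neg_pow] <;> ring
    · simp [h, hp0.ne']
  simp only [hedge]
  rw [Finset.sum_ite, Finset.sum_const, Finset.sum_const_zero, add_zero, hZ]
  simp [mul_comm]
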